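/- arXiv:1601.04256 — 2 statements merged into one kernel-verified Lean document; each statement's English description precedes it below -/
import Mathlib

section
/- The Laplacian maps the space of homogeneous polynomials of degree m in n variables onto the space of homogeneous polynomials of degree m-2, and hence dim H_m(ℝ^n) = binomial(n+m-1, n-1) - binomial(n+m-3, n-1), where H_m(ℝ^n) is the space of harmonic homogeneous polynomials of degree m. -/
/-!
Since `Δ` lowers the degree by two, it maps `P_m` into `P_{m-2}`. For surjectivity it suffices to
hit every monomial `x^d` of degree `m - 2`: `Δ (x₀² x^d)` is a nonzero multiple of `x^d` plus
monomials with a strictly larger exponent of `x₀`, so a downward induction on the exponent of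
`x₀` puts `x^d` in the image. Rank–nullity then gives
`dim H_m = dim P_m - dim P_{m-2}`, and `dim P_k` is the number `C(n+k-1, k)` of monomials of
degree `k` in `n` variables.
-/

open MvPolynomial

/-- The polynomial Laplacian `Δ = ∑ i ∂²/∂xᵢ²` on polynomials in `n` variables. -/
noncomputable def polyLaplacian (n : ℕ) :
    MvPolynomial (Fin n) ℂ →ₗ[ℂ] MvPolynomial (Fin n) ℂ :=
  ∑ i : Fin n, (pderiv i).toLinearMap ∘ₗ (pderiv i).toLinearMap

theorem Nat.multichoose_eq_choose_pred {n : ℕ} (hn : 0 < n) (k : ℕ) :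
    n.multichoose k = (n + k - 1).choose (n - 1) := by
  rw [Nat.multichoose_eq]
  exact Nat.choose_symm_of_eq_add (by omega)

theorem Submodule.finrank_inf_ker_add_finrank_map {K V W : Type*} [DivisionRing K]
    [AddCommGroup V] [Module K V] [AddCommGroup W] [Module K W]
    (f : V →ₗ[K] W) (p : Submodule K V) [FiniteDimensional K p] :
    Module.finrank K ↥(p ⊓ LinearMap.ker f) + Module.finrank K ↥(p.map f) =
      Module.finrank K p := by
  rw [← LinearMap.range_domRestrict, ← LinearMap.finrank_range_add_finrank_ker (f.domRestrict p),
    LinearMap.ker_domRestrict, ← Submodule.finrank_map_subtype_eq, Submodule.map_comap_subtype,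
    add_comm]

namespace MvPolynomial

instance {σ R : Type*} [Finite σ] [CommSemiring R] (k : ℕ) :
    Module.Finite R (homogeneousSubmodule σ R k) :=
  Module.Finite.iff_fg.mpr (homogeneousSubmodule_fg σ R k)

theorem finrank_homogeneousSubmodule {σ R : Type*} [Fintype σ] [CommRing R]
    [StrongRankCondition R] (k : ℕ) :
    Module.finrank R (homogeneousSubmodule σ R k) = (Fintype.card σ).multichoose k := by
  classical
  have hdeg : {d : σ →₀ ℕ | d.degree = k} = ↑((Finset.univ : Finset σ).finsuppAntidiag k) := by
    ext d
    simp [Finsupp.degree_eq_sum]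
  rw [homogeneousSubmodule_eq_finsupp_supported, hdeg,
    (AddMonoidAlgebra.supportedEquivFinsupp _).finrank_eq, Module.finrank_finsupp_self]
  simp [Finset.card_finsuppAntidiag_nat_eq_multichoose]

end MvPolynomial

section polyLaplacian

variable {n : ℕ}

theorem polyLaplacian_mem_homogeneousSubmodule {k : ℕ} {p : MvPolynomial (Fin n) ℂ}
    (hp : p ∈ homogeneousSubmodule (Fin n) ℂ k) :
    polyLaplacian n p ∈ homogeneousSubmodule (Fin n) ℂ (k - 2) := by
  rw [polyLaplacian, LinearMap.sum_apply]
  exact Submodule.sum_mem _ fun i _ => (hp.pderiv.pderiv : IsHomogeneous _ (k - 1 - 1))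

theorem polyLaplacian_monomial (e : Fin n →₀ ℕ) (a : ℂ) :
    polyLaplacian n (monomial e a) =
      ∑ i, monomial (e - Finsupp.single i 2) (a * (e i * (e i - 1) : ℕ)) := by
  simp [polyLaplacian, pderiv_monomial, tsub_tsub, ← Finsupp.single_add, mul_assoc]

theorem monomial_mem_map_polyLaplacian (z : Fin n) {k : ℕ} (d : Fin n →₀ ℕ)
    (hd : d.degree = k) :
    monomial d (1 : ℂ) ∈ (homogeneousSubmodule (Fin n) ℂ (k + 2)).map (polyLaplacian n) := by
  set S := (homogeneousSubmodule (Fin n) ℂ (k + 2)).map (polyLaplacian n)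
  induction hj : k - d z using Nat.strong_induction_on generalizing d with
  | _ j ih =>
  set e := d + Finsupp.single z 2
  have he : e.degree = k + 2 := by simp [e, hd]
  have hΔ : polyLaplacian n (monomial e 1) ∈ S :=
    Submodule.mem_map_of_mem (isHomogeneous_monomial _ he)
  rw [polyLaplacian_monomial, ← Finset.add_sum_erase _ _ (Finset.mem_univ z)] at hΔ
  -- For `i ≠ z` the `z`-exponent of `e - 2 eᵢ` is `d z + 2`, so the induction hypothesis applies.
  have hrest : ∑ i ∈ Finset.univ.erase z,
      monomial (e - Finsupp.single i 2) (1 * (e i * (e i - 1) : ℕ) : ℂ) ∈ S := by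
    refine Submodule.sum_mem _ fun i hi => ?_
    have hiz : i ≠ z := Finset.ne_of_mem_erase hi
    by_cases h2 : 2 ≤ e i
    · set d' := e - Finsupp.single i 2
      have hd'e : d' + Finsupp.single i 2 = e :=
        tsub_add_cancel_of_le (Finsupp.single_le_iff.mpr h2)
      have hd' : d'.degree = k := by
        have := congrArg Finsupp.degree hd'e
        simp only [map_add, Finsupp.degree_single, he] at this
        omega
      have hd'z : d' z = d z + 2 := by simp [d', e, hiz]
      have hlt : k - d' z < j := by
        have := Finsupp.le_degree z d'
        omega
      have := S.smul_mem ((1 * (e i * (e i - 1) : ℕ) : ℂ)) (ih _ hlt d' hd' rfl)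
      rwa [smul_monomial, smul_eq_mul, mul_one] at this
    · have : e i * (e i - 1) = 0 := by interval_cases e i <;> rfl
      simp [this]
  have hz : e - Finsupp.single z 2 = d := add_tsub_cancel_right d _
  have hc : ((e z * (e z - 1) : ℕ) : ℂ) ≠ 0 := Nat.cast_ne_zero.mpr (by simp [e])
  have := S.smul_mem ((e z * (e z - 1) : ℕ) : ℂ)⁻¹ (S.sub_mem hΔ hrest)
  rwa [add_sub_cancel_right, hz, smul_monomial, smul_eq_mul, one_mul, inv_mul_cancel₀ hc] at this

theorem map_polyLaplacian_homogeneousSubmodule (z : Fin n) (k : ℕ) :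
    (homogeneousSubmodule (Fin n) ℂ (k + 2)).map (polyLaplacian n) =
      homogeneousSubmodule (Fin n) ℂ k := by
  refine le_antisymm (Submodule.map_le_iff_le_comap.mpr
    fun p hp => polyLaplacian_mem_homogeneousSubmodule (k := k + 2) hp) ?_
  rw [homogeneousSubmodule_eq_finsupp_supported (Fin n) ℂ k,
    AddMonoidAlgebra.supported_eq_span_single, Submodule.span_le]
  rintro _ ⟨d, hd, rfl⟩
  exact monomial_mem_map_polyLaplacian z d hd

end polyLaplacian

/-- The Laplacian maps homogeneous polynomials of degree `m` onto those of
degree `m-2`, and hence the space `H_m` of harmonic homogeneous polynomials of degree `m`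
has dimension `C(n+m-1, n-1) - C(n+m-3, n-1)`. -/
theorem laplacian_surjective_and_dim_harmonic (n m : ℕ) (hn : 0 < n) (hm : 2 ≤ m) :
    (∀ p ∈ homogeneousSubmodule (Fin n) ℂ m,
        polyLaplacian n p ∈ homogeneousSubmodule (Fin n) ℂ (m - 2)) ∧
    (∀ q ∈ homogeneousSubmodule (Fin n) ℂ (m - 2),
        ∃ p ∈ homogeneousSubmodule (Fin n) ℂ m, polyLaplacian n p = q) ∧
    Module.finrank ℂ
        ↥(homogeneousSubmodule (Fin n) ℂ m ⊓ LinearMap.ker (polyLaplacian n))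
      = (n + m - 1).choose (n - 1) - (n + m - 3).choose (n - 1) := by
  obtain ⟨k, rfl⟩ : ∃ k, m = k + 2 := ⟨m - 2, by omega⟩
  have hmap := map_polyLaplacian_homogeneousSubmodule (⟨0, hn⟩ : Fin n) k
  refine ⟨fun p hp => polyLaplacian_mem_homogeneousSubmodule hp, fun q hq => ?_, ?_⟩
  · rwa [Nat.add_sub_cancel, ← hmap] at hq
  · have hrank := Submodule.finrank_inf_ker_add_finrank_map (polyLaplacian n)
      (homogeneousSubmodule (Fin n) ℂ (k + 2))
    rw [hmap, finrank_homogeneousSubmodule, finrank_homogeneousSubmodule, Fintype.card_fin,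
      Nat.multichoose_eq_choose_pred hn, Nat.multichoose_eq_choose_pred hn] at hrank
    rw [show n + (k + 2) - 3 = n + k - 1 by omega]
    omega
end

section
/- If P is a homogeneous harmonic polynomial of degree k on ℝ^n, then its restriction g to the unit sphere S^{n-1} satisfies -Δ_{S^{n-1}} g = k(k+n-2) g, i.e., g is an eigenfunction of the spherical Laplacian with eigenvalue k(k+n-2). -/
/-- The Euclidean Laplacian of a function on `ℝⁿ`, as the sum of the second partial
derivatives along the standard orthonormal coordinate directions. -/
noncomputable def euclLaplacian (n : ℕ) (u : EuclideanSpace ℝ (Fin n) → ℝ)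
    (x : EuclideanSpace ℝ (Fin n)) : ℝ :=
  ∑ i : Fin n,
    fderiv ℝ (fun y => fderiv ℝ u y (EuclideanSpace.single i 1)) x (EuclideanSpace.single i 1)

open Real Filter

section aux

variable {n k : ℕ} {P : EuclideanSpace ℝ (Fin n) → ℝ}

lemma HHRE.sum_coord_smul_single (x : EuclideanSpace ℝ (Fin n)) :
    ∑ i, x i • EuclideanSpace.single i (1 : ℝ) = x := by
  have := (EuclideanSpace.basisFun (Fin n) ℝ).sum_repr x
  simpa [EuclideanSpace.basisFun_apply, EuclideanSpace.basisFun_repr] using this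

lemma HHRE.euler (hP : ContDiff ℝ (⊤ : ℕ∞) P)
    (hhom : ∀ (c : ℝ) (x : EuclideanSpace ℝ (Fin n)), P (c • x) = c ^ k * P x)
    (x : EuclideanSpace ℝ (Fin n)) :
    fderiv ℝ P x x = (k : ℝ) * P x := by
  have h1 : HasDerivAt (fun t : ℝ => P (t • x)) (fderiv ℝ P x x) 1 := by
    have hP' : HasFDerivAt P (fderiv ℝ P ((1 : ℝ) • x)) ((1 : ℝ) • x) :=
      ((hP.differentiable (by simp)) _).hasFDerivAt
    have hs : HasDerivAt (fun t : ℝ => t • x) x 1 := by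
      simpa using (hasDerivAt_id (1 : ℝ)).smul_const x
    have := hP'.comp_hasDerivAt 1 hs; simp only [one_smul] at this; exact this
  have h2 : HasDerivAt (fun t : ℝ => P (t • x)) ((k : ℝ) * P x) 1 := by
    have he : (fun t : ℝ => P (t • x)) = fun t : ℝ => t ^ k * P x := by
      funext t; rw [hhom]
    rw [he]
    simpa using (hasDerivAt_pow k (1 : ℝ)).mul_const (P x)
  exact h1.unique h2

end aux

/-- if `P` is a homogeneous harmonic polynomial map of degree `k` on `ℝⁿ`,
then its restriction `g` to the unit sphere satisfies `-Δ_{S^{n-1}} g = k(k+n-2) g`,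
where `Δ_{S^{n-1}} g` is the Laplacian of the degree-zero homogeneous extension
`y ↦ P(y/‖y‖)` evaluated on the sphere. -/
theorem harmonic_homogeneous_restriction_eigenfunction (n k : ℕ)
    (P : EuclideanSpace ℝ (Fin n) → ℝ)
    (hP : ContDiff ℝ (⊤ : ℕ∞) P)
    (hhom : ∀ (c : ℝ) (x : EuclideanSpace ℝ (Fin n)), P (c • x) = c ^ k * P x)
    (hharm : ∀ x, euclLaplacian n P x = 0)
    (x : EuclideanSpace ℝ (Fin n)) (hx : ‖x‖ = 1) :
    -euclLaplacian n (fun y => P (‖y‖⁻¹ • y)) x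
      = ((k : ℝ) * ((k : ℝ) + (n : ℝ) - 2)) * P x := by
  classical
  set s : ℝ := -(k : ℝ) / 2 with hs
  have hx0 : x ≠ 0 := by
    intro h; rw [h] at hx; simp at hx
  set e : Fin n → EuclideanSpace ℝ (Fin n) := fun i => EuclideanSpace.single i 1 with he
  have hPdiff : Differentiable ℝ P := hP.differentiable (by simp)
  have hfd : ContDiff ℝ (⊤ : ℕ∞) (fderiv ℝ P) := hP.fderiv_right (mod_cast le_top)
  set h : EuclideanSpace ℝ (Fin n) → ℝ := fun y => (‖y‖ ^ 2 : ℝ) ^ s * P y with hh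
  -- local identification of the two functions
  have hloc : ∀ y : EuclideanSpace ℝ (Fin n), y ≠ 0 → P (‖y‖⁻¹ • y) = h y := by
    intro y hy
    have hny : (0 : ℝ) < ‖y‖ := norm_pos_iff.mpr hy
    have hr : ((‖y‖ ^ 2 : ℝ)) ^ s = ‖y‖⁻¹ ^ k := by
      rw [← Real.rpow_natCast ‖y‖ 2, ← Real.rpow_mul (norm_nonneg y)]
      have h2s : ((2 : ℕ) : ℝ) * s = -(k : ℝ) := by rw [hs]; push_cast; ring
      rw [h2s, Real.rpow_neg (norm_nonneg y), Real.rpow_natCast, inv_pow]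
    rw [hhom]; simp only [hh]; rw [hr]
  -- derivative of the rpow of norm-squared
  have hrq : ∀ (y : EuclideanSpace ℝ (Fin n)), y ≠ 0 → ∀ t : ℝ,
      HasFDerivAt (fun z : EuclideanSpace ℝ (Fin n) => (‖z‖ ^ 2 : ℝ) ^ t)
        ((t * (‖y‖ ^ 2 : ℝ) ^ (t - 1)) • (2 • (innerSL ℝ y))) y := by
    intro y hy t
    have hq : HasFDerivAt (fun z : EuclideanSpace ℝ (Fin n) => ‖z‖ ^ 2)
        (2 • (innerSL ℝ y)) y := (hasStrictFDerivAt_norm_sq y).hasFDerivAt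
    have hb : (‖y‖ ^ 2 : ℝ) ≠ 0 := pow_ne_zero 2 (norm_ne_zero_iff.mpr hy)
    exact (Real.hasDerivAt_rpow_const (Or.inl hb)).comp_hasFDerivAt y hq
  -- derivative of h away from 0
  have hDh : ∀ y : EuclideanSpace ℝ (Fin n), y ≠ 0 →
      HasFDerivAt h (((‖y‖ ^ 2 : ℝ) ^ s) • fderiv ℝ P y
        + (P y) • ((s * (‖y‖ ^ 2 : ℝ) ^ (s - 1)) • (2 • (innerSL ℝ y)))) y :=
    fun y hy => (hrq y hy s).mul (hPdiff y).hasFDerivAt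
  -- the first directional derivative function
  set ψ : Fin n → EuclideanSpace ℝ (Fin n) → ℝ := fun i y =>
    (‖y‖ ^ 2 : ℝ) ^ s * fderiv ℝ P y (e i)
      + P y * (s * (‖y‖ ^ 2 : ℝ) ^ (s - 1) * (2 * (inner ℝ (e i) y : ℝ))) with hψ
  have hopen : ∀ᶠ y in nhds x, y ≠ 0 := eventually_ne_nhds hx0
  have hg_h : (fun y => P (‖y‖⁻¹ • y)) =ᶠ[nhds x] h := hopen.mono fun y hy => hloc y hy
  have hfe : fderiv ℝ (fun y => P (‖y‖⁻¹ • y)) =ᶠ[nhds x] fderiv ℝ h := hg_h.fderiv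
  have hfirst : ∀ i : Fin n,
      (fun y => fderiv ℝ (fun z => P (‖z‖⁻¹ • z)) y (e i)) =ᶠ[nhds x] ψ i := by
    intro i
    filter_upwards [hfe, hopen] with y h1 h2
    rw [h1, (hDh y h2).fderiv]
    simp only [ContinuousLinearMap.add_apply, ContinuousLinearMap.smul_apply,
      smul_eq_mul, ContinuousLinearMap.coe_smul', Pi.smul_apply, innerSL_apply_apply, hψ]
    rw [real_inner_comm]
    ring
  have hx2 : (‖x‖ ^ 2 : ℝ) = 1 := by rw [hx]; norm_num
  have hkey : ∀ i : Fin n,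
      fderiv ℝ (fun y => fderiv ℝ (fun z => P (‖z‖⁻¹ • z)) y (e i)) x (e i)
        = fderiv ℝ (fun y => fderiv ℝ P y (e i)) x (e i)
          + 4 * s * (x i) * fderiv ℝ P x (e i)
          + (4 * s * (s - 1) * (x i) ^ 2 + 2 * s) * P x := by
    intro i
    rw [(hfirst i).fderiv_eq]
    have hc1 := hrq x hx0 s
    have hA := hrq x hx0 (s - 1)
    have hinnerP : HasFDerivAt (fderiv ℝ P) (fderiv ℝ (fderiv ℝ P) x) x :=
      ((hfd.differentiable (by simp)) x).hasFDerivAt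
    have hf1 : HasFDerivAt (fun y => fderiv ℝ P y (e i))
        ((ContinuousLinearMap.apply ℝ ℝ (e i)).comp (fderiv ℝ (fderiv ℝ P) x)) x :=
      (ContinuousLinearMap.apply ℝ ℝ (e i)).hasFDerivAt.comp x hinnerP
    have hL : HasFDerivAt (fun y : EuclideanSpace ℝ (Fin n) => (inner ℝ (e i) y : ℝ))
        (innerSL ℝ (e i)) x := (innerSL ℝ (e i)).hasFDerivAt
    have hL2 := hL.const_mul (2 : ℝ)
    have hu := (hA.const_mul s).mul hL2
    have hterm2 := (hPdiff x).hasFDerivAt.mul hu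
    have hterm1 := hc1.mul hf1
    have Hpsi := hterm1.add hterm2
    have hψi : fderiv ℝ (ψ i) x = _ := Hpsi.fderiv
    rw [hψi, hf1.fderiv]
    simp only [ContinuousLinearMap.add_apply, ContinuousLinearMap.smul_apply, smul_eq_mul,
      ContinuousLinearMap.comp_apply, ContinuousLinearMap.apply_apply, innerSL_apply_apply, hx2,
      Real.one_rpow, he, EuclideanSpace.inner_single_left, EuclideanSpace.inner_single_right,
      RCLike.conj_to_real, map_one, one_mul, mul_one, nsmul_eq_mul, Nat.cast_ofNat,
      ContinuousLinearMap.coe_smul', Pi.smul_apply]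
    simp only [EuclideanSpace.single_apply, eq_self_iff_true, if_true, Pi.mul_apply, hx2,
      Real.one_rpow, one_mul]
    ring
  -- summation identities
  have hsum1 : ∑ i, (x i) ^ 2 = (1 : ℝ) := by
    have h1 : Real.sqrt (∑ i, ‖x i‖ ^ 2) = 1 := by
      rw [← EuclideanSpace.norm_eq]; exact hx
    rw [Real.sqrt_eq_one] at h1
    simpa [Real.norm_eq_abs, sq_abs] using h1
  have hsum2 : ∑ i, x i * fderiv ℝ P x (e i) = (k : ℝ) * P x := by
    have h2 : fderiv ℝ P x (∑ i, x i • e i) = ∑ i, x i * fderiv ℝ P x (e i) := by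
      rw [map_sum]
      exact Finset.sum_congr rfl fun i _ => by
        rw [ContinuousLinearMap.map_smul]; rfl
    rw [← h2, he]
    rw [HHRE.sum_coord_smul_single x]
    exact HHRE.euler hP hhom x
  have hsum3 : ∑ i, fderiv ℝ (fun y => fderiv ℝ P y (e i)) x (e i) = 0 := by
    simpa [euclLaplacian, he] using hharm x
  have hlap : euclLaplacian n (fun y => P (‖y‖⁻¹ • y)) x
      = ∑ i, (fderiv ℝ (fun y => fderiv ℝ P y (e i)) x (e i)
          + 4 * s * (x i) * fderiv ℝ P x (e i)
          + (4 * s * (s - 1) * (x i) ^ 2 + 2 * s) * P x) := by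
    rw [euclLaplacian]
    exact Finset.sum_congr rfl fun i _ => hkey i
  rw [hlap]
  rw [Finset.sum_add_distrib, Finset.sum_add_distrib, hsum3]
  have e2 : ∑ i, 4 * s * (x i) * fderiv ℝ P x (e i) = 4 * s * ((k : ℝ) * P x) := by
    rw [show (fun i => 4 * s * (x i) * fderiv ℝ P x (e i))
        = fun i => (4 * s) * (x i * fderiv ℝ P x (e i)) from funext fun i => by ring]
    rw [← Finset.mul_sum, hsum2]
  have e3 : ∑ i, (4 * s * (s - 1) * (x i) ^ 2 + 2 * s) * P x
      = (4 * s * (s - 1) + 2 * s * (n : ℝ)) * P x := by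
    rw [show (fun i => (4 * s * (s - 1) * (x i) ^ 2 + 2 * s) * P x)
        = fun i => (4 * s * (s - 1) * P x) * (x i) ^ 2 + 2 * s * P x from
        funext fun i => by ring]
    rw [Finset.sum_add_distrib, ← Finset.mul_sum, hsum1, Finset.sum_const,
      Finset.card_univ, Fintype.card_fin]
    ring
  rw [e2, e3, hs]
  ring
end
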